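/- Let f : D_X → ℂ^{K} and g : D_Y → ℂ^{K} be vector-valued functions on measure spaces D_X, D_Y such that ∫ f(x) ⊗ conj(f(x)) dx = vec(I_K) and ∫ g(y) ⊗ conj(g(y)) dy = vec(I_K), where ⊗ is the Kronecker product of vectors and vec(I_K) is the flattening of the K×K identity matrix. Then the Hadamard product h(x,y) = f(x) ⊙ g(y) satisfies ∫∫ h(x,y) ⊗ conj(h(x,y)) dx dy = vec(I_K). -/
import Mathlib


open MeasureTheory

noncomputable section

/-- Kronecker product of vectors. -/
def kron {ι κ : Type*} (v : ι → ℂ) (w : κ → ℂ) : ι × κ → ℂ := fun p => v p.1 * w p.2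

/-- Flattening of the identity matrix. -/
def vecId (ι : Type*) [DecidableEq ι] : ι × ι → ℂ := fun p => if p.1 = p.2 then 1 else 0

lemma integral_pi_apply {α ι : Type*} [MeasurableSpace α] [Fintype ι]
    (μ : Measure α) {F : α → ι → ℂ} (h : Integrable F μ) (i : ι) :
    (∫ x, F x ∂μ) i = ∫ x, F x i ∂μ :=
  ((ContinuousLinearMap.proj (R := ℂ) (φ := fun _ : ι => ℂ) i).integral_comp_comm h).symm

lemma kron_mul_split {K : ℕ} (a b : Fin K → ℂ) :
    kron (a * b) (star (a * b)) = kron a (star a) * kron b (star b) := by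
  funext p
  simp [kron, star_mul']
  ring

/-- Hadamard-layer case in the proof of Theorem 2: if `∫ f ⊗ conj f = vec(I_K)`
and `∫ g ⊗ conj g = vec(I_K)`, then the Hadamard product `h(x,y) = f(x) ⊙ g(y)`
satisfies `∫∫ h ⊗ conj h = vec(I_K)`. -/
theorem hadamard_layer_orthonormal
    {DX DY : Type*} [MeasurableSpace DX] [MeasurableSpace DY]
    (μ : Measure DX) (ν : Measure DY) {K : ℕ}
    (f : DX → Fin K → ℂ) (g : DY → Fin K → ℂ)
    (hf : (∫ x, kron (f x) (star (f x)) ∂μ) = vecId (Fin K))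
    (hg : (∫ y, kron (g y) (star (g y)) ∂ν) = vecId (Fin K)) :
    (∫ x, ∫ y, kron (f x * g y) (star (f x * g y)) ∂ν ∂μ) = vecId (Fin K) := by
  rcases Nat.eq_zero_or_pos K with hK | hK
  · subst hK
    funext p
    exact p.1.elim0
  · have hvec1 : vecId (Fin K) (⟨0, hK⟩, ⟨0, hK⟩) = 1 := by simp [vecId]
    have hgInt : Integrable (fun y => kron (g y) (star (g y))) ν := by
      by_contra h
      rw [integral_undef h] at hg
      have := congrFun hg (⟨0, hK⟩, ⟨0, hK⟩)
      rw [hvec1] at this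
      simp at this
    have hfInt : Integrable (fun x => kron (f x) (star (f x))) μ := by
      by_contra h
      rw [integral_undef h] at hf
      have := congrFun hf (⟨0, hK⟩, ⟨0, hK⟩)
      rw [hvec1] at this
      simp at this
    have hinner : ∀ x, (∫ y, kron (f x * g y) (star (f x * g y)) ∂ν)
        = kron (f x) (star (f x)) * vecId (Fin K) := by
      intro x
      have hrw : (fun y => kron (f x * g y) (star (f x * g y)))
          = fun y => kron (f x) (star (f x)) * kron (g y) (star (g y)) := by
        funext y; exact kron_mul_split _ _
      rw [hrw]
      funext p
      rw [integral_pi_apply ν (hgInt.const_mul _) p]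
      simp only [Pi.mul_apply]
      rw [integral_const_mul, ← integral_pi_apply ν hgInt p, hg]
    simp only [hinner]
    funext p
    rw [integral_pi_apply μ (hfInt.mul_const _) p]
    simp only [Pi.mul_apply]
    rw [integral_mul_const, ← integral_pi_apply μ hfInt p, hf]
    by_cases h : p.1 = p.2 <;> simp [vecId, h]
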